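/- arXiv:1807.02499 — 2 statements merged into one kernel-verified Lean document; each statement's English description precedes it below -/
import Mathlib

section
/- Let Λ̃ be a commutative ring, I ⊂ Λ̃ an ideal, and Z a finitely generated Λ̃-module that is infinite in cardinality and annihilated by some power of p. Suppose Λ̃ is module-finite over a subring Λ ≅ W[[T]] (W the Witt vectors of a finite field) such that Λ̃/pΛ̃ is generated over Λ/pΛ by finitely many nilpotent elements. Then Z ⊗_{Λ̃} Λ, viewed as a Λ-module, has positive μ-invariant; equivalently, (Z ⊗_{Λ̃} Λ)/p is infinite. -/
/-!
Let `K ⊆ Λ̃` be the ideal generated by `p` and the finitely many generators `s` that are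
nilpotent modulo `p`. Writing `x ∈ ker π` as `λ + b + c` with `λ ∈ Λ`, `b ∈ (s)`, `c ∈ pΛ̃`,
we get `λ = -π(b + c) ∈ √(pΛ) = pΛ`, because `Λ/p = 𝔽[[T]]` is a domain; hence `ker π ⊆ K`,
and `Z/KZ` is a quotient of `Z/(IZ + pZ)`. Now `K` is finitely generated with `K ⊆ √(p)`,
so some power `K^n` kills `Z`, and each `K^i Z / K^(i+1) Z` is an image of finitely many
copies of `Z/KZ`. So if `Z/(IZ + pZ)` were finite, `Z` would be finite.
-/

section FiniteQuotient

variable {R M N : Type*} [CommRing R] [AddCommGroup M] [Module R M] [AddCommGroup N] [Module R N]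

theorem Ideal.finite_quotient_smul_top_of_surjective (J : Ideal R) {f : M →ₗ[R] N}
    (hf : Function.Surjective f) [Finite (M ⧸ J • (⊤ : Submodule R M))] :
    Finite (N ⧸ J • (⊤ : Submodule R N)) := by
  refine Finite.of_surjective (Submodule.mapQ _ _ f (Submodule.smul_top_le_comap_smul_top J f)) ?_
  intro y
  obtain ⟨n, rfl⟩ := Submodule.mkQ_surjective _ y
  obtain ⟨m, rfl⟩ := hf n
  exact ⟨Submodule.mkQ _ m, rfl⟩

theorem Ideal.finite_smul_top_of_smul_smul_top_eq_bot {I J : Ideal R} (hI : I.FG)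
    [Finite (M ⧸ J • (⊤ : Submodule R M))] (h : I • J • (⊤ : Submodule R M) = ⊥) :
    Finite ↥(I • (⊤ : Submodule R M)) := by
  obtain ⟨s, rfl⟩ := hI
  have hker (a : (s : Set R)) :
      J • (⊤ : Submodule R M) ≤ LinearMap.ker (a.1 • LinearMap.id : M →ₗ[R] M) := by
    intro x hx
    rw [LinearMap.mem_ker, ← Submodule.mem_bot R, ← h]
    exact Submodule.smul_mem_smul (Ideal.subset_span a.2) hx
  let f : ((s : Set R) →₀ (M ⧸ J • (⊤ : Submodule R M))) →ₗ[R] M :=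
    Finsupp.lsum R fun a ↦ (J • (⊤ : Submodule R M)).liftQ _ (hker a)
  have hf : f ∘ₗ Finsupp.mapRange.linearMap (J • (⊤ : Submodule R M)).mkQ =
      Finsupp.lsum R fun a : (s : Set R) ↦ a.1 • LinearMap.id := by
    ext; simp [f]
  have : Ideal.span (s : Set R) • (⊤ : Submodule R M) = LinearMap.range f := by
    rw [Submodule.span_smul_eq, Submodule.smul_top_eq_range_lsum, ← hf,
      LinearMap.range_comp_of_range_eq_top]
    exact LinearMap.range_eq_top.2 <|
      Finsupp.mapRange_surjective _ (map_zero _) (Submodule.mkQ_surjective _)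
  rw [this]
  have : Finite ((s : Set R) →₀ (M ⧸ J • (⊤ : Submodule R M))) :=
    .of_equiv _ Finsupp.equivFunOnFinite.symm
  exact Finite.of_surjective _ f.surjective_rangeRestrict

theorem Ideal.finite_of_pow_smul_top_eq_bot {J : Ideal R} (hJ : J.FG) {n : ℕ}
    (hn : J ^ n • (⊤ : Submodule R M) = ⊥) [Finite (M ⧸ J • (⊤ : Submodule R M))] :
    Finite M := by
  induction n generalizing M with
  | zero =>
    rw [pow_zero, Ideal.one_eq_top, Submodule.top_smul] at hn
    have := (Submodule.subsingleton_iff R).1 (subsingleton_iff_bot_eq_top.1 hn.symm)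
    exact .of_subsingleton
  | succ n ih =>
    set L := J ^ n • (⊤ : Submodule R M)
    have hL : Finite L := by
      refine Ideal.finite_smul_top_of_smul_smul_top_eq_bot (J := J) hJ.pow ?_
      rwa [← Submodule.mul_smul, ← pow_succ]
    have : Finite ((M ⧸ L) ⧸ J • (⊤ : Submodule R (M ⧸ L))) :=
      J.finite_quotient_smul_top_of_surjective L.mkQ_surjective
    have hQ : Finite (M ⧸ L) := by
      refine ih ?_
      rw [← Submodule.range_mkQ L, LinearMap.range_eq_map, ← Submodule.map_smul'',
        Submodule.mkQ_map_self]
    exact (finite_iff_addSubgroup_quotient L.toAddSubgroup).2 ⟨hL, hQ⟩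

theorem Ideal.exists_pow_smul_top_eq_bot_of_le_radical {K : Ideal R} (hK : K.FG) {a : R}
    (hKa : K ≤ (Ideal.span {a}).radical) {t : ℕ} (ht : ∀ z : M, a ^ t • z = 0) :
    ∃ n, K ^ n • (⊤ : Submodule R M) = ⊥ := by
  obtain ⟨m, hm⟩ := Ideal.exists_pow_le_of_le_radical_of_fg hKa hK
  refine ⟨m * t, le_bot_iff.1 (Submodule.smul_le.2 fun r hr z _ ↦ ?_)⟩
  have hr' : r ∈ Ideal.span {a ^ t} := by
    rw [← Ideal.span_singleton_pow]
    exact Ideal.pow_right_mono hm t (pow_mul K m t ▸ hr)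
  obtain ⟨b, rfl⟩ := Ideal.mem_span_singleton'.1 hr'
  rw [mul_smul, ht, smul_zero]
  exact zero_mem _

end FiniteQuotient

section Retraction

variable {R A : Type*} [CommRing R] [CommRing A] [Algebra R A]

theorem Algebra.exists_sub_algebraMap_mem_of_mem_adjoin {s : Set A} {K : Ideal A} (hs : s ⊆ K)
    {a : A} (ha : a ∈ Algebra.adjoin R s) : ∃ r : R, a - algebraMap R A r ∈ K := by
  induction ha using Algebra.adjoin_induction with
  | mem x hx => exact ⟨0, by simpa using hs hx⟩
  | algebraMap r => exact ⟨r, by simp⟩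
  | add x y _ _ hx hy =>
    obtain ⟨r, hr⟩ := hx
    obtain ⟨t, ht⟩ := hy
    exact ⟨r + t, by simpa [add_sub_add_comm] using add_mem hr ht⟩
  | mul x y _ _ hx hy =>
    obtain ⟨r, hr⟩ := hx
    obtain ⟨t, ht⟩ := hy
    refine ⟨r * t, ?_⟩
    have : x * y - algebraMap R A (r * t) =
        (x - algebraMap R A r) * y + algebraMap R A r * (y - algebraMap R A t) := by
      rw [map_mul]; ring
    rw [this]
    exact add_mem (K.mul_mem_right _ hr) (K.mul_mem_left _ ht)

theorem AlgHom.ker_le_of_adjoin_sup_eq_top (π : A →ₐ[R] R) {s : Set A} {K : Ideal A}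
    {I : Ideal R} (hs : s ⊆ K) (hKI : K ≤ I.comap π) (hIK : I.map (algebraMap R A) ≤ K)
    (htop : Subalgebra.toSubmodule (Algebra.adjoin R s) ⊔ K.restrictScalars R = ⊤) :
    RingHom.ker π ≤ K := by
  intro x hx
  obtain ⟨a, ha, c, hc, rfl⟩ := Submodule.mem_sup.1 (htop ▸ Submodule.mem_top : x ∈ _)
  obtain ⟨r, hr⟩ := Algebra.exists_sub_algebraMap_mem_of_mem_adjoin hs ha
  have hy : a - algebraMap R A r + c ∈ K := add_mem hr hc
  have hπy : π (a - algebraMap R A r + c) = -r := by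
    rw [RingHom.mem_ker] at hx
    rw [sub_add_eq_add_sub, map_sub, hx, AlgHom.commutes, Algebra.algebraMap_self_apply, zero_sub]
  have hr' : algebraMap R A r ∈ K := by
    simpa [hπy] using K.neg_mem (hIK (Ideal.mem_map_of_mem _ (hKI hy)))
  convert add_mem hy hr' using 1; ring

end Retraction

namespace PowerSeries

variable {R : Type*} [CommRing R]

theorem C_dvd_iff {a : R} {f : R⟦X⟧} : C a ∣ f ↔ ∀ n, a ∣ coeff n f := by
  refine ⟨fun ⟨g, hg⟩ n ↦ ⟨coeff n g, by rw [hg, coeff_C_mul]⟩, fun h ↦ ?_⟩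
  choose c hc using h
  exact ⟨mk c, ext fun n ↦ by rw [coeff_C_mul, coeff_mk, hc]⟩

theorem ker_map_mk_span_singleton (a : R) :
    RingHom.ker (map (Ideal.Quotient.mk (Ideal.span {a}))) = Ideal.span {C a} := by
  ext f
  simp [RingHom.mem_ker, Ideal.mem_span_singleton, C_dvd_iff, PowerSeries.ext_iff, coeff_map,
    Ideal.Quotient.eq_zero_iff_mem]

theorem isPrime_span_C {a : R} (ha : (Ideal.span {a}).IsPrime) :
    (Ideal.span {C a} : Ideal R⟦X⟧).IsPrime := by
  rw [← ker_map_mk_span_singleton]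
  exact RingHom.ker_isPrime _

end PowerSeries

theorem WittVector.isPrime_span_p_powerSeries (p : ℕ) [Fact p.Prime] (k : Type*) [Field k]
    [CharP k p] [PerfectRing k p] : (Ideal.span {(p : PowerSeries (WittVector p k))}).IsPrime := by
  rw [← map_natCast PowerSeries.C]
  exact PowerSeries.isPrime_span_C <|
    (Ideal.span_singleton_prime (WittVector.p_nonzero p k)).2 (WittVector.irreducible p).prime

theorem mu_positive_of_infinite_p_torsion_general
    (p : ℕ) [Fact p.Prime]
    (𝔽 : Type*) [Field 𝔽] [Fintype 𝔽] [CharP 𝔽 p]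
    (Λt : Type*) [CommRing Λt]
    [Algebra (PowerSeries (WittVector p 𝔽)) Λt]
    (π : Λt →ₐ[PowerSeries (WittVector p 𝔽)] PowerSeries (WittVector p 𝔽))
    (hnil : ∃ s : Finset Λt,
      (∀ x ∈ s, ∃ n : ℕ, x ^ n ∈ Ideal.span ({(p : Λt)} : Set Λt)) ∧
      (Subalgebra.toSubmodule
          (Algebra.adjoin (PowerSeries (WittVector p 𝔽)) (s : Set Λt)) ⊔
        Submodule.restrictScalars (PowerSeries (WittVector p 𝔽))
          (Ideal.span ({(p : Λt)} : Set Λt)) = ⊤))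
    (Z : Type*) [AddCommGroup Z] [Module Λt Z] [Infinite Z]
    (htor : ∃ t : ℕ, 1 ≤ t ∧ ∀ z : Z, ((p : Λt) ^ t) • z = 0) :
    Infinite (Z ⧸
      ((RingHom.ker π.toRingHom) • (⊤ : Submodule Λt Z) ⊔
        (Ideal.span ({(p : Λt)} : Set Λt)) • (⊤ : Submodule Λt Z))) := by
  classical
  obtain ⟨s, hs_nil, hs_top⟩ := hnil
  obtain ⟨t, -, ht⟩ := htor
  set P := Ideal.span ({(p : Λt)} : Set Λt)
  set K := Ideal.span (insert (p : Λt) (s : Set Λt))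
  have hPK : P ≤ K := Ideal.span_mono (by simp)
  have hKP : K ≤ P.radical :=
    Ideal.span_le.2 (Set.insert_subset (Ideal.le_radical (Ideal.mem_span_singleton_self _)) hs_nil)
  have hKFG : K.FG := ⟨insert (p : Λt) s, by simp [K]⟩
  have hker : RingHom.ker π.toRingHom ≤ K := by
    refine π.ker_le_of_adjoin_sup_eq_top (I := Ideal.span {(p : PowerSeries (WittVector p 𝔽))})
      ((Set.subset_insert _ _).trans Ideal.subset_span) ?_ ?_
      (eq_top_mono (sup_le_sup_left (fun _ hx ↦ hPK hx) _) hs_top)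
    · exact hKP.trans <| ((WittVector.isPrime_span_p_powerSeries p 𝔽).comap π).radical_le_iff.2 <|
        Ideal.span_le.2 (by simp)
    · simpa [Ideal.map_span] using hPK (Ideal.mem_span_singleton_self _)
  obtain ⟨n, hn⟩ := Ideal.exists_pow_smul_top_eq_bot_of_le_radical hKFG hKP ht
  refine not_finite_iff_infinite.1 fun hfin ↦ ?_
  have : Finite (Z ⧸ K • (⊤ : Submodule Λt Z)) := .of_surjective _ <| Submodule.factor_surjective <|
    sup_le (Submodule.smul_mono_left hker) (Submodule.smul_mono_left hPK)
  have := Ideal.finite_of_pow_smul_top_eq_bot hKFG hn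
  exact not_finite Z

/-- Let `Λ = W[[T]]` (`W` the Witt vectors of a finite field `𝔽` of characteristic `p`),
`Λ̃` a module-finite `Λ`-algebra with a `Λ`-algebra retraction `π : Λ̃ → Λ` (with kernel
`I`), such that `Λ̃/pΛ̃` is generated over `Λ/pΛ` by finitely many nilpotent elements.
If `Z` is a finitely generated `Λ̃`-module that is infinite and annihilated by a power
of `p`, then `(Z ⊗_{Λ̃} Λ)/p = Z/(IZ + pZ)` is infinite, i.e. `Z ⊗_{Λ̃} Λ` has positive
`μ`-invariant as a `Λ`-module. -/
theorem mu_positive_of_infinite_p_torsion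
    (p : ℕ) [Fact p.Prime]
    (𝔽 : Type*) [Field 𝔽] [Fintype 𝔽] [CharP 𝔽 p]
    (Λt : Type*) [CommRing Λt]
    [Algebra (PowerSeries (WittVector p 𝔽)) Λt]
    [Module.Finite (PowerSeries (WittVector p 𝔽)) Λt]
    (π : Λt →ₐ[PowerSeries (WittVector p 𝔽)] PowerSeries (WittVector p 𝔽))
    (hnil : ∃ s : Finset Λt,
      (∀ x ∈ s, ∃ n : ℕ, x ^ n ∈ Ideal.span ({(p : Λt)} : Set Λt)) ∧
      (Subalgebra.toSubmodule
          (Algebra.adjoin (PowerSeries (WittVector p 𝔽)) (s : Set Λt)) ⊔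
        Submodule.restrictScalars (PowerSeries (WittVector p 𝔽))
          (Ideal.span ({(p : Λt)} : Set Λt)) = ⊤))
    (Z : Type*) [AddCommGroup Z] [Module Λt Z] [Module.Finite Λt Z] [Infinite Z]
    (htor : ∃ t : ℕ, 1 ≤ t ∧ ∀ z : Z, ((p : Λt) ^ t) • z = 0) :
    Infinite (Z ⧸
      ((RingHom.ker π.toRingHom) • (⊤ : Submodule Λt Z) ⊔
        (Ideal.span ({(p : Λt)} : Set Λt)) • (⊤ : Submodule Λt Z))) :=
  mu_positive_of_infinite_p_torsion_general p 𝔽 Λt π hnil Z htor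
end

section
/- Let G be a profinite group, X a closed normal abelian pro-p subgroup with G/X ≅ Γ = ℤ_p topologically generated by γ. Then the extension 1 → X → G → Γ → 1 is split, and for each n ≥ 0, the commutator subgroup of the preimage G_n of Γ^{p^n} equals (γ^{p^n} − 1)X, i.e. the maximal abelian quotient of G_n sits in a split exact sequence 1 → X/(γ^{p^n}−1)X → G_n^{ab} → Γ^{p^n} → 1. -/
/-!
Every finite quotient of `G` is a `p`-group, being an extension of a quotient of `ℤ_p` by a
quotient of the pro-`p` group `X`; hence `g ^ m → 1` as `m → 0` `p`-adically. Let `H` be the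
closure of the powers of a lift `g` of `1 ∈ ℤ_p`. Then `φ` maps `H` onto `ℤ_p`, and injectively:
if `g ^ mᵢ → h` with `φ h = 1`, then `mᵢ → 0` `p`-adically, so `h = 1`. Inverting the continuous
bijection `H → ℤ_p` of compact groups splits the extension.

For the commutators, `G_n = H_n X` where `H_n` is the closure of the powers of `γ_n`. The closed
subgroup `D` generated by the `[γ_n, x]` is normal, since `[g, γ_n] ∈ X` for every `g`. Modulo `D`,
`γ_n` centralizes `X`, hence so does `H_n`; as `H_n` and `X` are abelian, `G_n / D` is abelian.
-/

open Filter Topology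
open scoped commutatorElement

theorem PadicInt.exists_natCast_dvd_pow {p : ℕ} [Fact p.Prime] {m : ℕ} (hm : m ≠ 0) :
    ∃ j : ℕ, (m : ℤ_[p]) ∣ (p : ℤ_[p]) ^ j := by
  obtain ⟨j, n, hpn, rfl⟩ := Nat.exists_eq_pow_mul_and_not_dvd hm p (Fact.out : p.Prime).ne_one
  have hn : IsUnit (n : ℤ_[p]) := by
    rw [PadicInt.isUnit_iff, PadicInt.norm_natCast_eq_one_iff]
    exact (Nat.Prime.coprime_iff_not_dvd Fact.out).mpr hpn
  exact ⟨j, by push_cast; exact hn.mul_right_dvd.mpr dvd_rfl⟩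

theorem PadicInt.exists_pow_mem_of_index_ne_zero {p : ℕ} [Fact p.Prime]
    {A : Subgroup (Multiplicative ℤ_[p])} (hA : A.index ≠ 0) :
    ∃ j : ℕ, ∀ z, z ^ p ^ j ∈ A := by
  obtain ⟨j, c, hc⟩ := PadicInt.exists_natCast_dvd_pow (p := p) hA
  refine ⟨j, fun z => ?_⟩
  have hz : z ^ p ^ j = Multiplicative.ofAdd (c * z.toAdd) ^ A.index := by
    apply Multiplicative.toAdd.injective
    simp only [toAdd_pow, toAdd_ofAdd, nsmul_eq_mul, Nat.cast_pow, hc]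
    ring
  rw [hz]
  exact A.pow_index_mem _

/-- For profinite `G` this says that `G` is a pro-`p` group. -/
def IsProPGroup (p : ℕ) (G : Type*) [Group G] [TopologicalSpace G] : Prop :=
  ∀ U : Subgroup G, U.Normal → IsOpen (U : Set G) → ∃ k : ℕ, ∀ g : G, g ^ p ^ k ∈ U

section Profinite

variable {G : Type*} [Group G] [TopologicalSpace G] [IsTopologicalGroup G] [CompactSpace G]
  {p : ℕ} [Fact p.Prime]

theorem isProPGroup_of_ker {φ : G →* Multiplicative ℤ_[p]} (hφ : Function.Surjective φ)
    (hker : ∀ U : Subgroup φ.ker, IsOpen (U : Set φ.ker) → ∃ k : ℕ, U.index = p ^ k) :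
    IsProPGroup p G := by
  intro U _ hU
  have : U.FiniteIndex := @Subgroup.finiteIndex_of_finite_quotient _ _ _
    (U.quotient_finite_of_isOpen hU)
  set K := φ.ker ⊔ U
  have hK : K = (K.map φ).comap φ := by
    rw [Subgroup.comap_map_eq, sup_eq_left.mpr le_sup_left]
  have hKφ : (K.map φ).index ≠ 0 := by
    rw [← Subgroup.index_comap_of_surjective _ hφ, ← hK]
    exact (Subgroup.finiteIndex_of_le (le_sup_right : U ≤ K)).index_ne_zero
  obtain ⟨j, hj⟩ := PadicInt.exists_pow_mem_of_index_ne_zero hKφ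
  obtain ⟨a, ha⟩ := hker (U.subgroupOf φ.ker) (hU.preimage continuous_subtype_val)
  refine ⟨j + a, fun g => ?_⟩
  have hgK : g ^ p ^ j ∈ K := by
    rw [hK, Subgroup.mem_comap, map_pow]
    exact hj _
  have hU' := U.pow_relIndex_mem hgK
  rwa [Subgroup.relIndex_sup_right, Subgroup.relIndex, ha, ← pow_mul, ← pow_add] at hU'

theorem IsProPGroup.tendsto_zpow [TotallyDisconnectedSpace G] (hG : IsProPGroup p G) (g : G) :
    Tendsto (g ^ · : ℤ → G) (comap ((↑) : ℤ → ℤ_[p]) (𝓝 0)) (𝓝 1) := by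
  intro V hV
  obtain ⟨W, hWV, hW, h1⟩ := mem_nhds_iff.mp hV
  obtain ⟨U, hUW⟩ := ProfiniteGrp.exist_openNormalSubgroup_sub_open_nhds_of_one hW h1
  obtain ⟨k, hk⟩ := hG U U.isNormal' U.isOpen
  have hball : Metric.closedBall (0 : ℤ_[p]) ((p : ℝ) ^ (-k : ℤ)) ∈ 𝓝 0 :=
    Metric.closedBall_mem_nhds _ (zpow_pos (mod_cast (Fact.out : p.Prime).pos) _)
  refine mem_map.mpr (mem_of_superset (preimage_mem_comap hball) fun m hm => hWV (hUW ?_))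
  obtain ⟨c, rfl⟩ := PadicInt.norm_int_le_pow_iff_dvd.mp (mem_closedBall_zero_iff.mp hm)
  show g ^ ((p : ℤ) ^ k * c) ∈ U
  rw [mul_comm, zpow_mul]
  exact_mod_cast hk (g ^ c)

end Profinite

theorem eq_one_of_mem_topologicalClosure_zpowers {G : Type*} [Group G] [TopologicalSpace G]
    [IsTopologicalGroup G] [T2Space G] {p : ℕ} [Fact p.Prime] {φ : G →* Multiplicative ℤ_[p]}
    (hφ : Continuous φ) {g : G} (hg : φ g = Multiplicative.ofAdd 1)
    (hlim : Tendsto (g ^ · : ℤ → G) (comap ((↑) : ℤ → ℤ_[p]) (𝓝 0)) (𝓝 1)) {h : G}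
    (hh : h ∈ (Subgroup.zpowers g).topologicalClosure) (hφh : φ h = 1) : h = 1 := by
  rw [← SetLike.mem_coe, Subgroup.topologicalClosure_coe, Subgroup.coe_zpowers,
    mem_closure_iff_nhds] at hh
  set F := comap (g ^ · : ℤ → G) (𝓝 h)
  have : F.NeBot := comap_neBot_iff.mpr fun t ht => by
    obtain ⟨_, hxt, m, rfl⟩ := hh t ht
    exact ⟨m, hxt⟩
  have hgh : Tendsto (g ^ · : ℤ → G) F (𝓝 h) := tendsto_comap
  have hcast : Tendsto ((↑) : ℤ → ℤ_[p]) F (𝓝 0) := by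
    have := (continuous_toAdd.tendsto _).comp ((hφ.tendsto h).comp hgh)
    simpa [Function.comp_def, hg, hφh] using this
  exact tendsto_nhds_unique hgh (hlim.mono_left (tendsto_iff_comap.mp hcast))

theorem map_topologicalClosure_zpowers {G H : Type*} [Group G] [TopologicalSpace G]
    [IsTopologicalGroup G] [CompactSpace G] [Group H] [TopologicalSpace H]
    [IsTopologicalGroup H] [T2Space H] {φ : G →* H} (hφ : Continuous φ) (g : G) :
    (Subgroup.zpowers g).topologicalClosure.map φ =
      (Subgroup.zpowers (φ g)).topologicalClosure := by
  apply le_antisymm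
  · rw [← SetLike.coe_subset_coe, Subgroup.coe_map, Subgroup.topologicalClosure_coe,
      Subgroup.topologicalClosure_coe, ← MonoidHom.map_zpowers, Subgroup.coe_map]
    exact image_closure_subset_closure_image hφ
  · refine Subgroup.topologicalClosure_minimal _ ?_ ?_
    · rw [← MonoidHom.map_zpowers]
      exact Subgroup.map_mono (Subgroup.le_topologicalClosure _)
    · rw [Subgroup.coe_map]
      exact ((Subgroup.isClosed_topologicalClosure _).isCompact.image hφ).isClosed

theorem topologicalClosure_zpowers_ofAdd_one {p : ℕ} [Fact p.Prime] :
    (Subgroup.zpowers (Multiplicative.ofAdd (1 : ℤ_[p]))).topologicalClosure = ⊤ := by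
  rw [← SetLike.coe_set_eq, Subgroup.topologicalClosure_coe, Subgroup.coe_zpowers,
    Subgroup.coe_top, ← dense_iff_closure_eq]
  simp only [← ofAdd_zsmul, zsmul_one]
  exact PadicInt.denseRange_intCast

theorem exists_continuous_section {G : Type*} [Group G] [TopologicalSpace G]
    [IsTopologicalGroup G] [CompactSpace G] [T2Space G] {p : ℕ} [Fact p.Prime]
    {φ : G →* Multiplicative ℤ_[p]} (hφ : Continuous φ) {g : G} (hg : φ g = Multiplicative.ofAdd 1)
    (hlim : Tendsto (g ^ · : ℤ → G) (comap ((↑) : ℤ → ℤ_[p]) (𝓝 0)) (𝓝 1)) :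
    ∃ s : Multiplicative ℤ_[p] →* G, Continuous s ∧ ∀ z, φ (s z) = z := by
  set H := (Subgroup.zpowers g).topologicalClosure
  have : CompactSpace H :=
    isCompact_iff_compactSpace.mp (Subgroup.isClosed_topologicalClosure _).isCompact
  set f := φ.comp H.subtype
  have hf : Function.Bijective f := by
    refine ⟨(injective_iff_map_eq_one f).mpr fun h hh => Subtype.ext ?_, fun z => ?_⟩
    · exact eq_one_of_mem_topologicalClosure_zpowers hφ hg hlim h.2 hh
    · have hz : z ∈ H.map φ := by
        rw [map_topologicalClosure_zpowers hφ, hg, topologicalClosure_zpowers_ofAdd_one]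
        trivial
      obtain ⟨h, hh, rfl⟩ := hz
      exact ⟨⟨h, hh⟩, rfl⟩
  set e := MulEquiv.ofBijective f hf
  have he : Continuous e.symm := Continuous.continuous_symm_of_equiv_compact_to_t2
    (f := e.toEquiv) (hφ.comp continuous_subtype_val)
  exact ⟨H.subtype.comp e.symm.toMonoidHom, continuous_subtype_val.comp he, e.apply_symm_apply⟩

section Commutators

variable {G : Type*} [Group G]

theorem commutatorElement_mem_iff_commute {N : Subgroup G} [N.Normal] {a b : G} :
    ⁅a, b⁆ ∈ N ↔ Commute (a : G ⧸ N) (b : G ⧸ N) := by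
  rw [← QuotientGroup.eq_one_iff, ← commutatorElement_eq_one_iff_commute]
  exact Iff.rfl

theorem commutator_sup_le {H K D : Subgroup G} [K.Normal] [D.Normal]
    (hH : ∀ a ∈ H, ∀ b ∈ H, Commute a b) (hK : ∀ a ∈ K, ∀ b ∈ K, Commute a b)
    (hHK : ∀ a ∈ H, ∀ b ∈ K, ⁅a, b⁆ ∈ D) : ⁅H ⊔ K, H ⊔ K⁆ ≤ D := by
  rw [Subgroup.commutator_le]
  rintro _ hg _ hh
  obtain ⟨u, hu, x, hx, rfl⟩ := Subgroup.mem_sup_of_normal_right.mp hg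
  obtain ⟨v, hv, y, hy, rfl⟩ := Subgroup.mem_sup_of_normal_right.mp hh
  have mk_comm : ∀ {a b : G}, Commute a b → Commute (a : G ⧸ D) (b : G ⧸ D) :=
    fun h => h.map (QuotientGroup.mk' D)
  have huy := commutatorElement_mem_iff_commute.mp (hHK u hu y hy)
  have hvx := commutatorElement_mem_iff_commute.mp (hHK v hv x hx)
  rw [commutatorElement_mem_iff_commute, QuotientGroup.mk_mul, QuotientGroup.mk_mul]
  exact ((mk_comm (hH u hu v hv)).mul_right huy).mul_left
    (hvx.symm.mul_right (mk_comm (hK x hx y hy)))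

theorem conj_commutatorElement {X : Subgroup G} [X.Normal] (hX : ∀ a ∈ X, ∀ b ∈ X, Commute a b)
    {γ g x : G} (hg : ⁅g, γ⁆ ∈ X) (hx : x ∈ X) : g * ⁅γ, x⁆ * g⁻¹ = ⁅γ, g * x * g⁻¹⁆ := by
  set y := g * x * g⁻¹
  have hy : y ∈ X := Subgroup.Normal.conj_mem ‹_› x hx g
  have hγy : ⁅γ, y⁆ ∈ X := X.mul_mem (Subgroup.Normal.conj_mem ‹_› y hy γ) (X.inv_mem hy)
  calc g * ⁅γ, x⁆ * g⁻¹
      _ = ⁅g, γ⁆ * ⁅γ, y⁆ * ⁅g, γ⁆⁻¹ * ⁅⁅g, γ⁆, y⁆ := by simp only [y]; group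
      _ = ⁅γ, y⁆ := by
        rw [commutatorElement_eq_one_iff_commute.mpr (hX _ hg _ hy), mul_one,
          (hX _ hg _ hγy).eq, mul_inv_cancel_right]

theorem closure_setOf_commutatorElement_normal {X : Subgroup G} [X.Normal]
    (hX : ∀ a ∈ X, ∀ b ∈ X, Commute a b) {γ : G} (hγ : ∀ g : G, ⁅g, γ⁆ ∈ X) :
    (Subgroup.closure {g : G | ∃ x ∈ X, g = γ * x * γ⁻¹ * x⁻¹}).Normal := by
  refine Subgroup.normalizer_eq_top_iff.mp (eq_top_iff.mpr
    (Subgroup.le_normalizer_closure_iff.mpr ?_))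
  rintro g - _ ⟨x, hx, rfl⟩
  exact Subgroup.subset_closure ⟨g * x * g⁻¹, Subgroup.Normal.conj_mem ‹_› x hx g,
    conj_commutatorElement hX (hγ g) hx⟩

variable [TopologicalSpace G] [IsTopologicalGroup G]

theorem commutatorElement_mem_of_mem_topologicalClosure_zpowers {D : Subgroup G} [D.Normal]
    (hD : IsClosed (D : Set G)) {s : Set G} {γ : G} (hγ : ∀ x ∈ s, ⁅γ, x⁆ ∈ D) {u : G}
    (hu : u ∈ (Subgroup.zpowers γ).topologicalClosure) {x : G} (hx : x ∈ s) : ⁅u, x⁆ ∈ D := by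
  -- makes `G ⧸ D` Hausdorff (`QuotientGroup.instT3Space` takes closedness as an instance)
  have := hD
  set C := (Subgroup.centralizer (((↑) : G → G ⧸ D) '' s)).comap (QuotientGroup.mk' D)
  have hC : (Subgroup.zpowers γ).topologicalClosure ≤ C := by
    refine Subgroup.topologicalClosure_minimal _ (Subgroup.zpowers_le.mpr ?_)
      ((Set.isClosed_centralizer _).preimage QuotientGroup.continuous_mk)
    rintro _ ⟨y, hy, rfl⟩
    exact (commutatorElement_mem_iff_commute.mp (hγ y hy)).symm.eq
  exact commutatorElement_mem_iff_commute.mpr (hC hu _ ⟨x, hx, rfl⟩).symm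

end Commutators

theorem topologicalClosure_commutator_comap_eq {G A : Type*} [Group G] [TopologicalSpace G]
    [IsTopologicalGroup G] [CompactSpace G] [T2Space G] [CommGroup A] [TopologicalSpace A]
    [IsTopologicalGroup A] [T2Space A] {φ : G →* A} (hφ : Continuous φ)
    (hker : ∀ a ∈ φ.ker, ∀ b ∈ φ.ker, Commute a b) (γ : G) :
    ⁅(Subgroup.zpowers (φ γ)).topologicalClosure.comap φ,
        (Subgroup.zpowers (φ γ)).topologicalClosure.comap φ⁆.topologicalClosure =
      (Subgroup.closure {g : G | ∃ x ∈ φ.ker, g = γ * x * γ⁻¹ * x⁻¹}).topologicalClosure := by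
  set H := (Subgroup.zpowers γ).topologicalClosure
  have hcomap : (Subgroup.zpowers (φ γ)).topologicalClosure.comap φ = H ⊔ φ.ker := by
    rw [← map_topologicalClosure_zpowers hφ, Subgroup.comap_map_eq]
  have hγ : ∀ g : G, ⁅g, γ⁆ ∈ φ.ker := fun g => by
    rw [MonoidHom.mem_ker, map_commutatorElement, commutatorElement_eq_one_iff_commute]
    exact Commute.all _ _
  have := closure_setOf_commutatorElement_normal hker hγ
  have := Subgroup.is_normal_topologicalClosure (Subgroup.closure
    {g : G | ∃ x ∈ φ.ker, g = γ * x * γ⁻¹ * x⁻¹})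
  have hH : ∀ a ∈ H, ∀ b ∈ H, Commute a b := fun a ha b hb => by
    let _ := (Subgroup.zpowers γ).commGroupTopologicalClosure fun x y =>
      Subtype.ext (setLike_mul_comm x.2 y.2)
    exact congrArg Subtype.val (mul_comm (⟨a, ha⟩ : H) ⟨b, hb⟩)
  rw [hcomap]
  apply le_antisymm
  · refine Subgroup.topologicalClosure_minimal _ (commutator_sup_le hH hker fun u hu x hx => ?_)
      (Subgroup.isClosed_topologicalClosure _)
    refine commutatorElement_mem_of_mem_topologicalClosure_zpowers
      (Subgroup.isClosed_topologicalClosure _) (fun y hy => ?_) hu hx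
    exact Subgroup.le_topologicalClosure _ (Subgroup.subset_closure ⟨y, hy, rfl⟩)
  · refine Subgroup.topologicalClosure_mono (Subgroup.closure_le _ |>.mpr ?_)
    rintro _ ⟨x, hx, rfl⟩
    exact Subgroup.commutator_mem_commutator
      (Subgroup.mem_sup_left (Subgroup.le_topologicalClosure _ (Subgroup.mem_zpowers γ)))
      (Subgroup.mem_sup_right hx)

/-- Let `G` be a profinite group, `X` a closed normal abelian pro-`p` subgroup with
`G/X ≅ Γ = ℤ_p` (via a continuous surjection `φ` with kernel `X`).  Then the extension
`1 → X → G → Γ → 1` is split, and for each `n ≥ 0` the (closed) commutator subgroup of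
the preimage `G_n` of `Γ^{p^n}` equals `(γ^{p^n} − 1)X`, the closed subgroup generated
by the elements `γ̃^{p^n} x γ̃^{−p^n} x⁻¹` for `x ∈ X` and a lift `γ̃^{p^n}` of
`γ^{p^n}`. -/
theorem split_extension_and_commutator_of_Zp_quotient
    {G : Type*} [Group G] [TopologicalSpace G] [IsTopologicalGroup G]
    [CompactSpace G] [TotallyDisconnectedSpace G] [T2Space G]
    (p : ℕ) [Fact p.Prime]
    (φ : G →* Multiplicative ℤ_[p]) (hφc : Continuous φ) (hφs : Function.Surjective φ)
    (X : Subgroup G) (hX : X = φ.ker)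
    (hXab : ∀ x ∈ X, ∀ y ∈ X, x * y = y * x)
    (hXpro : ∀ U : Subgroup X, IsOpen (U : Set X) → ∃ k : ℕ, U.index = p ^ k) :
    (∃ s : Multiplicative ℤ_[p] →* G, Continuous s ∧ ∀ z, φ (s z) = z) ∧
    (∀ (n : ℕ) (γn : G), φ γn = Multiplicative.ofAdd ((p : ℤ_[p]) ^ n) →
      (Subgroup.map
          (Subgroup.comap φ
            ((Subgroup.zpowers
              (Multiplicative.ofAdd ((p : ℤ_[p]) ^ n))).topologicalClosure)).subtype
          (commutator
            ↥(Subgroup.comap φ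
              ((Subgroup.zpowers
                (Multiplicative.ofAdd ((p : ℤ_[p]) ^ n))).topologicalClosure)))).topologicalClosure
        = (Subgroup.closure
            {g : G | ∃ x ∈ X, g = γn * x * γn⁻¹ * x⁻¹}).topologicalClosure) := by
  subst hX
  refine ⟨?_, fun n γn hγn => ?_⟩
  · obtain ⟨g, hg⟩ := hφs (Multiplicative.ofAdd 1)
    exact exists_continuous_section hφc hg ((isProPGroup_of_ker hφs hXpro).tendsto_zpow g)
  · rw [Subgroup.map_subtype_commutator, ← hγn]
    exact topologicalClosure_commutator_comap_eq hφc hXab γn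
end
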